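/- arXiv:2505.16472 — 6 statements merged into one kernel-verified Lean document; each statement's English description precedes it below -/
import Mathlib

section
/- Let (W, ω) be a symplectic ℚ-vector space and à ∈ Sp(W, ω) with characteristic polynomial χ = ρ·ρ* where ρ ∈ ℚ[X] is irreducible, ρ* (X) = X^{deg ρ}ρ(X⁻¹) up to normalization, and ρ ≠ ρ*. Then W̄ := ker ρ(Ã) is an Ã-invariant Lagrangian subspace of W. -/
open Polynomial

theorem aux_rev {A : Type*} [Ring A] [Algebra ℚ A]
    (f g : A) (hc : Commute f g) (hfg : f * g = 1) (p : ℚ[X]) :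
    aeval f p.reverse = f ^ p.natDegree * aeval g p := by
  rw [aeval_eq_sum_range' (lt_of_le_of_lt p.reverse_natDegree_le (Nat.lt_succ_self _)),
    aeval_eq_sum_range' (Nat.lt_succ_self p.natDegree), Finset.mul_sum,
    ← Finset.sum_range_reflect]
  apply Finset.sum_congr rfl
  intro i hi
  simp only [Finset.mem_range, Nat.lt_succ_iff] at hi
  have h1 : p.natDegree + 1 - 1 - i = p.natDegree - i := by omega
  rw [h1, coeff_reverse, revAt_le (Nat.sub_le _ _), Nat.sub_sub_self hi, mul_smul_comm]
  congr 1
  symm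
  calc f ^ p.natDegree * g ^ i = f ^ (p.natDegree - i) * f ^ i * g ^ i := by
        rw [← pow_add, Nat.sub_add_cancel hi]
    _ = f ^ (p.natDegree - i) * (f * g) ^ i := by rw [mul_assoc, hc.mul_pow]
    _ = f ^ (p.natDegree - i) := by rw [hfg, one_pow, mul_one]

/-- Let `(W, ω)` be a symplectic `ℚ`-vector space and `f ∈ Sp(W, ω)` with
characteristic polynomial `ρ·ρ*` (up to normalization `ρ* = reverse ρ`),
where `ρ` is irreducible and `ρ` and `ρ*` are not associated. Then
`ker ρ(f)` is an `f`-invariant Lagrangian subspace of `W`. -/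
theorem stmt_9 (W : Type*) [AddCommGroup W] [Module ℚ W] [FiniteDimensional ℚ W]
    (ω : W →ₗ[ℚ] W →ₗ[ℚ] ℚ)
    (halt : ∀ v, ω v v = 0)
    (hnd : ∀ v, (∀ w, ω v w = 0) → v = 0)
    (f : W →ₗ[ℚ] W) (hf : ∀ v w, ω (f v) (f w) = ω v w)
    (ρ : Polynomial ℚ) (hρ : Irreducible ρ)
    (hne : ¬ Associated ρ ρ.reverse)
    (hχ : Associated (LinearMap.charpoly f) (ρ * ρ.reverse)) :
    (∀ x ∈ LinearMap.ker (Polynomial.aeval (f : Module.End ℚ W) ρ),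
        f x ∈ LinearMap.ker (Polynomial.aeval (f : Module.End ℚ W) ρ)) ∧
    (∀ w : W, w ∈ LinearMap.ker (Polynomial.aeval (f : Module.End ℚ W) ρ) ↔
        ∀ v ∈ LinearMap.ker (Polynomial.aeval (f : Module.End ℚ W) ρ), ω v w = 0) := by
  set F : Module.End ℚ W := f with hFdef
  -- f is injective, hence a unit
  have hinj : Function.Injective f := by
    intro x y hxy
    have h0 : x - y = 0 := by
      apply hnd
      intro w
      have h := hf (x - y) w
      rw [map_sub, hxy, sub_self] at h
      rw [← h]
      simp
    exact sub_eq_zero.mp h0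
  have hunit : IsUnit F := (LinearMap.isUnit_iff_ker_eq_bot F).2 (LinearMap.ker_eq_bot.2 hinj)
  obtain ⟨u, hu⟩ := hunit
  set g : Module.End ℚ W := ↑u⁻¹ with hgdef
  have hFg : F * g = 1 := by rw [hgdef, ← hu]; exact_mod_cast u.mul_inv
  have hgF : g * F = 1 := by rw [hgdef, ← hu]; exact_mod_cast u.inv_mul
  have hcomm : Commute F g := by
    unfold Commute SemiconjBy
    rw [hFg, hgF]
  have hfg' : ∀ v, f (g v) = v := by
    intro v
    have := LinearMap.ext_iff.mp hFg v
    simpa [Module.End.mul_apply] using this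
  -- adjoint relation
  have hadj : ∀ v w, ω (g v) w = ω v (f w) := by
    intro v w
    have h := hf (g v) w
    rw [hfg'] at h
    exact h.symm
  have hpow : ∀ (i : ℕ) (v w : W), ω ((g ^ i) v) w = ω v ((F ^ i) w) := by
    intro i
    induction i with
    | zero => intro v w; simp
    | succ n ih =>
      intro v w
      have h1 : (g ^ (n + 1)) v = (g ^ n) (g v) := by
        rw [pow_succ, Module.End.mul_apply]
      have h2 : (F ^ (n + 1)) w = f ((F ^ n) w) := by
        rw [pow_succ']
        rfl
      rw [h1, ih, hadj, h2]
  have hpoly : ∀ (p : ℚ[X]) (v w : W), ω ((aeval g p) v) w = ω v ((aeval F p) w) := by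
    intro p
    induction p using Polynomial.induction_on' with
    | add p q hp hq =>
      intro v w
      simp only [map_add, LinearMap.add_apply, hp, hq]
    | monomial n c =>
      intro v w
      simp only [aeval_monomial, Module.End.mul_apply, Module.algebraMap_end_apply,
        map_smul, LinearMap.smul_apply, smul_eq_mul]
      rw [hpow]
  -- skew symmetry
  have hskew : ∀ v w, ω v w = - ω w v := by
    intro v w
    have h := halt (v + w)
    simp only [map_add, LinearMap.add_apply, halt] at h
    linarith
  -- reverse identities
  have hrev1 : aeval g ρ.reverse = g ^ ρ.natDegree * aeval F ρ :=
    aux_rev g F hcomm.symm hgF ρ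
  have hrev2 : aeval F ρ.reverse = F ^ ρ.natDegree * aeval g ρ :=
    aux_rev F g hcomm hFg ρ
  have hKg : ∀ v, aeval F ρ v = 0 → aeval g ρ.reverse v = 0 := by
    intro v hv
    rw [hrev1, Module.End.mul_apply, hv, map_zero]
  have hK'g : ∀ v, aeval F ρ.reverse v = 0 → aeval g ρ v = 0 := by
    intro v hv
    have hgd : g ^ ρ.natDegree * F ^ ρ.natDegree = 1 := by
      rw [← hcomm.symm.mul_pow, hgF, one_pow]
    have heq : aeval g ρ = g ^ ρ.natDegree * aeval F ρ.reverse := by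
      rw [hrev2, ← mul_assoc, hgd, one_mul]
    rw [heq, Module.End.mul_apply, hv, map_zero]
  -- coprimality
  have hcop : IsCoprime ρ ρ.reverse := by
    rw [hρ.coprime_iff_not_dvd]
    intro hdvd
    apply hne
    have hρ0 : ρ ≠ 0 := hρ.ne_zero
    obtain ⟨c, hc⟩ := hdvd
    have hrev0 : ρ.reverse ≠ 0 := by
      simpa [Polynomial.reverse_eq_zero] using hρ0
    have hc0 : c ≠ 0 := by
      rintro rfl
      rw [mul_zero] at hc
      exact hrev0 hc
    have hdeg : c.natDegree = 0 := by
      have h1 := Polynomial.natDegree_mul hρ0 hc0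
      have h2 := ρ.reverse_natDegree_le
      rw [hc, h1] at h2
      omega
    have hcunit : IsUnit c := by
      rw [Polynomial.eq_C_of_natDegree_eq_zero hdeg]
      refine Polynomial.isUnit_C.2 (isUnit_iff_ne_zero.2 ?_)
      intro h0
      apply hc0
      rw [Polynomial.eq_C_of_natDegree_eq_zero hdeg, h0, map_zero]
    obtain ⟨uc, huc⟩ := hcunit
    exact ⟨uc, by rw [huc, ← hc]⟩
  -- annihilation
  have hann : aeval F (ρ * ρ.reverse) = 0 := by
    obtain ⟨u2, hu2⟩ := hχ
    rw [← hu2, map_mul, LinearMap.aeval_self_charpoly, zero_mul]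
  obtain ⟨a, b, hab⟩ := hcop
  have hdecomp : ∀ w : W, w = aeval F (a * ρ) w + aeval F (b * ρ.reverse) w := by
    intro w
    have h1 : aeval F (a * ρ + b * ρ.reverse) = 1 := by rw [hab, map_one]
    have h2 := LinearMap.ext_iff.mp h1 w
    simp only [map_add, LinearMap.add_apply, Module.End.one_apply] at h2
    exact h2.symm
  have hmem1 : ∀ w : W, aeval F ρ (aeval F (b * ρ.reverse) w) = 0 := by
    have hop : aeval F ρ * aeval F (b * ρ.reverse) = 0 := by
      rw [← map_mul, show ρ * (b * ρ.reverse) = b * (ρ * ρ.reverse) by ring, map_mul,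
        hann, mul_zero]
    intro w
    have := LinearMap.ext_iff.mp hop w
    simpa [Module.End.mul_apply] using this
  have hmem2 : ∀ w : W, aeval F ρ.reverse (aeval F (a * ρ) w) = 0 := by
    have hop : aeval F ρ.reverse * aeval F (a * ρ) = 0 := by
      rw [← map_mul, show ρ.reverse * (a * ρ) = a * (ρ * ρ.reverse) by ring, map_mul,
        hann, mul_zero]
    intro w
    have := LinearMap.ext_iff.mp hop w
    simpa [Module.End.mul_apply] using this
  -- isotropy of K = ker ρ(f)
  have hisoK : ∀ v w : W, aeval F ρ v = 0 → aeval F ρ w = 0 → ω v w = 0 := by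
    intro v w hv hw
    have hz : aeval F (a * ρ) w = 0 := by
      rw [map_mul, Module.End.mul_apply, hw, map_zero]
    have hw' : w = aeval F (b * ρ.reverse) w := by
      have hd := hdecomp w
      rw [hz, zero_add] at hd
      exact hd
    rw [hw', ← hpoly]
    have hz2 : aeval g (b * ρ.reverse) v = 0 := by
      rw [map_mul, Module.End.mul_apply, hKg v hv, map_zero]
    rw [hz2]
    simp
  -- isotropy of K' = ker ρ*(f)
  have hisoK' : ∀ v w : W, aeval F ρ.reverse v = 0 → aeval F ρ.reverse w = 0 → ω v w = 0 := by
    intro v w hv hw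
    have hz : aeval F (b * ρ.reverse) w = 0 := by
      rw [map_mul, Module.End.mul_apply, hw, map_zero]
    have hw' : w = aeval F (a * ρ) w := by
      have hd := hdecomp w
      rw [hz, add_zero] at hd
      exact hd
    rw [hw', ← hpoly]
    have hz2 : aeval g (a * ρ) v = 0 := by
      rw [map_mul, Module.End.mul_apply, hK'g v hv, map_zero]
    rw [hz2]
    simp
  constructor
  · intro x hx
    rw [LinearMap.mem_ker] at hx ⊢
    have hcF : aeval F ρ * F = F * aeval F ρ := by
      calc aeval F ρ * F = aeval F (ρ * X) := by rw [map_mul, aeval_X]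
        _ = aeval F (X * ρ) := by rw [mul_comm]
        _ = F * aeval F ρ := by rw [map_mul, aeval_X]
    have := LinearMap.ext_iff.mp hcF x
    simp only [Module.End.mul_apply] at this
    show aeval F ρ (F x) = 0
    rw [this, hx, map_zero]
  · intro w
    constructor
    · intro hw v hv
      exact hisoK v w (LinearMap.mem_ker.mp hv) (LinearMap.mem_ker.mp hw)
    · intro h
      rw [LinearMap.mem_ker]
      set w1 := aeval F (b * ρ.reverse) w with hw1def
      set w2 := aeval F (a * ρ) w with hw2def
      have hw1K : aeval F ρ w1 = 0 := hmem1 w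
      have hw2K' : aeval F ρ.reverse w2 = 0 := hmem2 w
      have hwsum : w = w2 + w1 := hdecomp w
      have hall : ∀ u, ω u w2 = 0 := by
        intro u
        have hu1K : aeval F ρ (aeval F (b * ρ.reverse) u) = 0 := hmem1 u
        have h1 : ω (aeval F (b * ρ.reverse) u) w2 = 0 := by
          have hw2eq : w2 = w - w1 := by
            rw [hwsum]; abel
          rw [hw2eq, map_sub]
          rw [h _ (LinearMap.mem_ker.2 hu1K), hisoK _ _ hu1K hw1K, sub_zero]
        have h2 : ω (aeval F (a * ρ) u) w2 = 0 := hisoK' _ _ (hmem2 u) hw2K'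
        calc ω u w2 = ω (aeval F (a * ρ) u + aeval F (b * ρ.reverse) u) w2 := by
              rw [← hdecomp u]
          _ = 0 := by rw [map_add, LinearMap.add_apply, h1, h2, add_zero]
      have hw2z : w2 = 0 := by
        apply hnd
        intro u
        rw [hskew w2 u, hall u, neg_zero]
      rw [hwsum, hw2z, zero_add]
      exact hw1K
end

section
/- Let (W, ω) be a symplectic ℚ-vector space and à ∈ Sp(W, ω) with χ_à = ρρ*, ρ irreducible, ρ ≠ ρ*. Identify W ≅ W̄ × W̄* with ω((v,λ),(w,μ)) = λ(w) − μ(v), where W̄ = ker ρ(Ã). Then the centralizer of à in Sp(W, ω) equals {diag(B, (B⁻¹)ᵀ) : B ∈ GL(W̄) commuting with Ã|_{W̄}}, and is hence isomorphic to GL(W̄)_{Ã|_{W̄}}. -/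
/-!
The polynomials `χ_A` and `χ_{A⁻¹}` are monic of the same degree, the first is irreducible and
they differ, so they are coprime. A linear map intertwining `A` (killed by `χ_A`) with
`(A⁻¹)ᵀ` (killed by `χ_{A⁻¹}`) therefore vanishes, so every map commuting with
`diag(A, (A⁻¹)ᵀ)` is block diagonal, and preservation of `ω` forces its second block to be the
inverse transpose of the first.
-/

open Polynomial Module

theorem Polynomial.isCoprime_of_irreducible_of_natDegree_eq {K : Type*} [Field K] {p q : K[X]}
    (hp : Irreducible p) (hpm : p.Monic) (hqm : q.Monic) (hdeg : p.natDegree = q.natDegree)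
    (hne : p ≠ q) : IsCoprime p q :=
  hp.coprime_iff_not_dvd.2 fun hdvd ↦
    hne (eq_of_monic_of_dvd_of_natDegree_le hpm hqm hdvd hdeg.ge).symm

section Intertwining

variable {R M N : Type*} [CommRing R] [AddCommGroup M] [Module R M] [AddCommGroup N] [Module R N]

theorem LinearMap.comp_aeval_of_comp_eq {f : End R M} {g : End R N} {T : M →ₗ[R] N}
    (h : T ∘ₗ f = g ∘ₗ T) (p : R[X]) : T ∘ₗ aeval f p = aeval g p ∘ₗ T := by
  induction p using Polynomial.induction_on with
  | C a => ext; simp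
  | add p q hp hq => simp only [map_add, LinearMap.comp_add, LinearMap.add_comp, hp, hq]
  | monomial n a ih =>
    rw [pow_succ, ← mul_assoc]
    generalize C a * X ^ n = q at ih ⊢
    simp only [map_mul, aeval_X, Module.End.mul_eq_comp]
    rw [← LinearMap.comp_assoc, ih, LinearMap.comp_assoc, h, LinearMap.comp_assoc]

theorem LinearMap.eq_zero_of_comp_eq_of_isCoprime {f : End R M} {g : End R N} {T : M →ₗ[R] N}
    (h : T ∘ₗ f = g ∘ₗ T) {p q : R[X]} (hpq : IsCoprime p q) (hp : aeval f p = 0)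
    (hq : aeval g q = 0) : T = 0 := by
  obtain ⟨u, w, huw⟩ := hpq
  calc T = T ∘ₗ aeval f (u * p + w * q) := by rw [huw, map_one]; rfl
    _ = T ∘ₗ aeval f (w * q) := by simp [hp]
    _ = aeval g (w * q) ∘ₗ T := comp_aeval_of_comp_eq h _
    _ = 0 := by simp [hq]

theorem LinearMap.aeval_dualMap (f : End R M) (p : R[X]) :
    (aeval f p).dualMap = aeval f.dualMap p := by
  induction p using Polynomial.induction_on with
  | C a => ext; simp
  | add p q hp hq =>
    rw [map_add, map_add, ← hp, ← hq, dualMap_def, dualMap_def, dualMap_def, map_add]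
  | monomial n a ih =>
    rw [pow_succ, ← mul_assoc]
    generalize C a * X ^ n = q at ih ⊢
    rw [map_mul (aeval f.dualMap), aeval_X, ← ih, mul_comm, map_mul, aeval_X]
    ext φ x
    simp

end Intertwining

section BlockDiagonal

variable {R M N : Type*} [CommRing R] [AddCommGroup M] [Module R M] [AddCommGroup N] [Module R N]

theorem LinearEquiv.bijective_fst_apply_inl (C : (M × N) ≃ₗ[R] (M × N))
    (h₁ : ∀ m, (C (m, 0)).2 = 0) (h₂ : ∀ n, (C (0, n)).1 = 0) :
    Function.Bijective fun m ↦ (C (m, 0)).1 := by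
  have hC : ∀ m, C (m, 0) = ((C (m, 0)).1, 0) := fun m ↦ Prod.ext rfl (h₁ m)
  refine ⟨fun m m' hm ↦ ?_, fun m ↦ ?_⟩
  · have : C (m, 0) = C (m', 0) := by rw [hC m, hC m']; exact congrArg (·, 0) hm
    simpa using C.injective this
  · obtain ⟨⟨a, b⟩, hab⟩ := C.surjective (m, 0)
    refine ⟨a, ?_⟩
    have hsplit : C (a, b) = C (a, 0) + C (0, b) := by
      rw [← map_add, Prod.mk_add_mk, add_zero, zero_add]
    simpa [h₂] using congrArg Prod.fst (hsplit.symm.trans hab)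

theorem LinearEquiv.exists_eq_prodCongr_dualMap (C : (M × Dual R M) ≃ₗ[R] (M × Dual R M))
    (hω : ∀ p q : M × Dual R M, (C p).2 (C q).1 - (C q).2 (C p).1 = p.2 q.1 - q.2 p.1)
    (h₁ : ∀ m, (C (m, 0)).2 = 0) (h₂ : ∀ φ, (C (0, φ)).1 = 0) :
    ∃ B : M ≃ₗ[R] M, C = B.prodCongr B.symm.dualMap := by
  let B : M ≃ₗ[R] M :=
    .ofBijective (LinearMap.fst R M _ ∘ₗ C.toLinearMap ∘ₗ LinearMap.inl R M _)
      (C.bijective_fst_apply_inl h₁ h₂)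
  have hB : ∀ m, C (m, 0) = (B m, 0) := fun m ↦ Prod.ext rfl (h₁ m)
  have hdual : ∀ φ, (C (0, φ)).2 = B.symm.dualMap φ := fun φ ↦ by
    ext m
    have := hω (0, φ) (B.symm m, 0)
    simp only [hB, h₂, B.apply_symm_apply, map_zero, sub_zero] at this
    simpa using this
  refine ⟨B, LinearEquiv.ext fun ⟨m, φ⟩ ↦ ?_⟩
  have hsplit : C (m, φ) = C (m, 0) + C (0, φ) := by
    rw [← map_add, Prod.mk_add_mk, add_zero, zero_add]
  rw [hsplit, hB]
  ext <;> simp [h₂, hdual]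

end BlockDiagonal

/-- Identify `W ≅ W̄ × W̄*` with `ω((v,λ),(w,μ)) = λ(w) − μ(v)`, and let
`Ã = diag(A, (A⁻¹)ᵀ)` with `χ_Ã = ρ·ρ*`, `ρ = χ_A` irreducible and `ρ ≠ ρ*`.
Then the centralizer of `Ã` in `Sp(W, ω)` consists exactly of the maps
`diag(B, (B⁻¹)ᵀ)` with `B ∈ GL(W̄)` commuting with `A`. -/
theorem stmt_10 (V : Type*) [AddCommGroup V] [Module ℚ V] [FiniteDimensional ℚ V]
    (A : V ≃ₗ[ℚ] V)
    (hirr : Irreducible (LinearMap.charpoly (A : V →ₗ[ℚ] V)))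
    (hne : LinearMap.charpoly (A : V →ₗ[ℚ] V) ≠
      LinearMap.charpoly (A.symm : V →ₗ[ℚ] V)) :
    ∀ C : (V × Module.Dual ℚ V) ≃ₗ[ℚ] (V × Module.Dual ℚ V),
      ((∀ p q : V × Module.Dual ℚ V,
          (C p).2 (C q).1 - (C q).2 (C p).1 = p.2 q.1 - q.2 p.1) ∧
        (∀ p, C ((A.prodCongr A.symm.dualMap) p) = (A.prodCongr A.symm.dualMap) (C p))) ↔
      ∃ B : V ≃ₗ[ℚ] V, (∀ v, B (A v) = A (B v)) ∧ C = B.prodCongr B.symm.dualMap := by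
  intro C
  have hcop : IsCoprime (A : V →ₗ[ℚ] V).charpoly (A.symm : V →ₗ[ℚ] V).charpoly :=
    isCoprime_of_irreducible_of_natDegree_eq hirr (LinearMap.charpoly_monic _)
      (LinearMap.charpoly_monic _) (by simp only [LinearMap.charpoly_natDegree]) hne
  have hA := LinearMap.aeval_self_charpoly (A : V →ₗ[ℚ] V)
  have hD : aeval (A.symm : V →ₗ[ℚ] V).dualMap (A.symm : V →ₗ[ℚ] V).charpoly = 0 := by
    rw [← LinearMap.aeval_dualMap, LinearMap.aeval_self_charpoly, LinearMap.dualMap_def, map_zero]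
  constructor
  · rintro ⟨hω, hT⟩
    have h₁ : LinearMap.snd ℚ V _ ∘ₗ C.toLinearMap ∘ₗ LinearMap.inl ℚ V _ = 0 :=
      LinearMap.eq_zero_of_comp_eq_of_isCoprime (LinearMap.ext fun v ↦ by
        have := congrArg Prod.snd (hT (v, 0))
        rwa [LinearEquiv.prodCongr_apply, map_zero] at this) hcop hA hD
    have h₂ : LinearMap.fst ℚ V _ ∘ₗ C.toLinearMap ∘ₗ LinearMap.inr ℚ V _ = 0 :=
      LinearMap.eq_zero_of_comp_eq_of_isCoprime (LinearMap.ext fun φ ↦ by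
        have := congrArg Prod.fst (hT (0, φ))
        rwa [LinearEquiv.prodCongr_apply, map_zero] at this) hcop.symm hD hA
    obtain ⟨B, rfl⟩ :=
      C.exists_eq_prodCongr_dualMap hω (LinearMap.congr_fun h₁) (LinearMap.congr_fun h₂)
    exact ⟨B, fun v ↦ by simpa using congrArg Prod.fst (hT (v, 0)), rfl⟩
  · rintro ⟨B, hBA, rfl⟩
    refine ⟨fun p q ↦ by simp, fun p ↦ Prod.ext (by simpa using hBA p.1) ?_⟩
    ext v
    simp only [LinearEquiv.prodCongr_apply, LinearEquiv.dualMap_apply]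
    refine congrArg p.2 ?_
    rw [A.symm_apply_eq, B.symm_apply_eq, hBA]
    simp
end

section
/- If à ∈ Sp(W, ω) over ℚ has characteristic polynomial ρρ* with ρ irreducible, ρ ≠ ρ*, and χ_à separable, then à has no eigenvalues of modulus 1. -/
/-!
On the unit circle `conj z = z⁻¹`. Since `ρ` has rational coefficients its roots are stable under
conjugation, and the roots of `ρ* ~ reverse ρ` are the inverses of those of `ρ`; so a root of `ρ`
of modulus one is also a root of `ρ*`, hence a multiple root of `χ = ρ ρ*`, contradicting
separability.
-/

open Polynomial ComplexConjugate

namespace Polynomial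

theorem aeval_eq_zero_iff_of_associated {R A : Type*} [CommSemiring R] [CommSemiring A]
    [Algebra R A] {p q : R[X]} (h : Associated p q) (x : A) :
    aeval x p = 0 ↔ aeval x q = 0 :=
  ⟨aeval_eq_zero_of_dvd_aeval_eq_zero h.dvd, aeval_eq_zero_of_dvd_aeval_eq_zero h.symm.dvd⟩

theorem aeval_reverse_eq_zero_iff {R K : Type*} [CommSemiring R] [Field K] [Algebra R K]
    (p : R[X]) {x : K} (hx : x ≠ 0) : aeval x p.reverse = 0 ↔ aeval x⁻¹ p = 0 := by
  let _ := invertibleOfNonzero (inv_ne_zero hx)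
  simpa [aeval_def] using eval₂_reverse_eq_zero_iff (algebraMap R K) x⁻¹ p

theorem aeval_conj_eq_zero_iff (p : ℚ[X]) (z : ℂ) : aeval (conj z) p = 0 ↔ aeval z p = 0 := by
  rw [← RingHom.toRatAlgHom_apply, aeval_algHom_apply, RingHom.toRatAlgHom_apply, map_eq_zero]

theorem aeval_eq_zero_iff_of_associated_reverse_of_norm_eq_one {ρ ρstar : ℚ[X]}
    (hρs : Associated ρstar ρ.reverse) {z : ℂ} (hz : ‖z‖ = 1) :
    aeval z ρstar = 0 ↔ aeval z ρ = 0 := by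
  have hz0 : z ≠ 0 := norm_ne_zero_iff.mp (hz ▸ one_ne_zero)
  rw [aeval_eq_zero_iff_of_associated hρs, aeval_reverse_eq_zero_iff ρ hz0,
    Complex.inv_eq_conj hz, aeval_conj_eq_zero_iff]

theorem two_le_rootMultiplicity_mul {R : Type*} [CommRing R] [IsDomain R] {p q : R[X]} {x : R}
    (hpq : p * q ≠ 0) (hp : p.IsRoot x) (hq : q.IsRoot x) : 2 ≤ (p * q).rootMultiplicity x := by
  have hp' := (rootMultiplicity_pos (left_ne_zero_of_mul hpq)).mpr hp
  have hq' := (rootMultiplicity_pos (right_ne_zero_of_mul hpq)).mpr hq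
  rw [rootMultiplicity_mul hpq]
  omega

end Polynomial

theorem stmt_11_general (W : Type*) [AddCommGroup W] [Module ℚ W] [FiniteDimensional ℚ W]
    (f : W →ₗ[ℚ] W)
    (ρ ρstar : Polynomial ℚ)
    (hρs : Associated ρstar ρ.reverse)
    (hχ : LinearMap.charpoly f = ρ * ρstar)
    (hsep : ∀ z : ℂ,
      ((LinearMap.charpoly f).map (algebraMap ℚ ℂ)).rootMultiplicity z ≤ 1) :
    ∀ z : ℂ, ((LinearMap.charpoly f).map (algebraMap ℚ ℂ)).IsRoot z →
      ‖z‖ ≠ 1 := by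
  intro z hz hnorm
  have hχ0 : ((LinearMap.charpoly f).map (algebraMap ℚ ℂ)) ≠ 0 :=
    (f.charpoly_monic.map _).ne_zero
  rw [hχ, Polynomial.map_mul] at hχ0 hz hsep
  have hboth : aeval z ρ = 0 ∧ aeval z ρstar = 0 := by
    have hroot := aeval_eq_zero_iff_of_associated_reverse_of_norm_eq_one hρs hnorm
    rw [IsRoot.def, eval_mul, eval_map_algebraMap, eval_map_algebraMap, mul_eq_zero] at hz
    tauto
  have h2 := two_le_rootMultiplicity_mul hχ0
    (by rw [IsRoot.def, eval_map_algebraMap]; exact hboth.1)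
    (by rw [IsRoot.def, eval_map_algebraMap]; exact hboth.2)
  linarith [hsep z]

/-- If `f ∈ Sp(W, ω)` over `ℚ` has characteristic polynomial `ρ·ρ*` with `ρ`
irreducible, `ρ` not associated to `ρ*`, and `χ_f` separable, then `f` has no
eigenvalues of modulus 1. -/
theorem stmt_11 (W : Type*) [AddCommGroup W] [Module ℚ W] [FiniteDimensional ℚ W]
    (ω : W →ₗ[ℚ] W →ₗ[ℚ] ℚ)
    (halt : ∀ v, ω v v = 0)
    (hnd : ∀ v, (∀ w, ω v w = 0) → v = 0)
    (f : W →ₗ[ℚ] W) (hf : ∀ v w, ω (f v) (f w) = ω v w)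
    (ρ ρstar : Polynomial ℚ) (hρ : Irreducible ρ)
    (hρs : Associated ρstar ρ.reverse)
    (hne : ¬ Associated ρ ρstar)
    (hχ : LinearMap.charpoly f = ρ * ρstar)
    (hsep : ∀ z : ℂ,
      ((LinearMap.charpoly f).map (algebraMap ℚ ℂ)).rootMultiplicity z ≤ 1) :
    ∀ z : ℂ, ((LinearMap.charpoly f).map (algebraMap ℚ ℂ)).IsRoot z →
      ‖z‖ ≠ 1 :=
  stmt_11_general W f ρ ρstar hρs hχ hsep
end

section
/- Let A ∈ GL(m, ℚ) with separable characteristic polynomial. Then χ_{A^k} is separable for all k ∈ ℕ if and only if no ratio λ/μ of two (distinct, counted with multiplicity) eigenvalues of A is a root of unity. -/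
/-!
Over ℂ the roots of `χ_M`, as a set, form the spectrum of `M`, and the spectral mapping theorem
gives `σ(M^k) = (σ M)^k`. Since `χ_{M^k}` has degree `m` and splits, it is separable exactly when
it has `m` distinct roots, i.e. when `χ_M` is separable and `z ↦ z^k` is injective on its roots.
For invertible `A` all eigenvalues are nonzero, and `λ^k = μ^k` means `(λ/μ)^k = 1`.
-/

open Polynomial Finset

theorem Polynomial.nodup_roots_iff_rootMultiplicity_le_one {R : Type*} [CommRing R] [IsDomain R]
    (p : R[X]) : p.roots.Nodup ↔ ∀ z, p.rootMultiplicity z ≤ 1 := by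
  classical
  simp only [Multiset.nodup_iff_count_le_one, count_roots]

theorem Set.injOn_pow_iff_div_pow_ne_one {G : Type*} [CommGroupWithZero G] {s : Set G}
    (hs : (0 : G) ∉ s) :
    (∀ k : ℕ, 0 < k → s.InjOn (· ^ k)) ↔
      ∀ x y, x ∈ s → y ∈ s → x ≠ y → ∀ n : ℕ, 0 < n → (x / y) ^ n ≠ 1 := by
  have hdiv : ∀ x, ∀ y ∈ s, ∀ n : ℕ, (x / y) ^ n = 1 ↔ x ^ n = y ^ n := fun x y hy n => by
    rw [div_pow, div_eq_one_iff_eq (pow_ne_zero n (ne_of_mem_of_not_mem hy hs))]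
  constructor
  · intro h x y hx hy hxy n hn hpow
    exact hxy (h n hn hx hy ((hdiv x y hy n).mp hpow))
  · intro h k hk x hx y hy hpow
    by_contra hxy
    exact h x y hx hy hxy k hk ((hdiv x y hy k).mpr hpow)

namespace Matrix

variable {n K : Type*} [Fintype n] [DecidableEq n] [Field K]

theorem card_roots_charpoly [IsAlgClosed K] (M : Matrix n n K) :
    Multiset.card M.charpoly.roots = Fintype.card n := by
  rw [← (IsAlgClosed.splits _).natDegree_eq_card_roots, charpoly_natDegree_eq_dim]

variable [DecidableEq K]

theorem coe_toFinset_roots_charpoly (M : Matrix n n K) :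
    (M.charpoly.roots.toFinset : Set K) = spectrum K M := by
  ext z
  simp [mem_spectrum_iff_isRoot_charpoly, (charpoly_monic M).ne_zero]

variable [IsAlgClosed K]

theorem toFinset_roots_charpoly_pow (M : Matrix n n K) {k : ℕ} (hk : 0 < k) :
    (M ^ k).charpoly.roots.toFinset = M.charpoly.roots.toFinset.image (· ^ k) := by
  apply Finset.coe_injective
  rw [coe_image, coe_toFinset_roots_charpoly, coe_toFinset_roots_charpoly,
    spectrum.map_pow_of_pos M hk]

theorem nodup_roots_charpoly_pow_iff (M : Matrix n n K) {k : ℕ} (hk : 0 < k) :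
    (M ^ k).charpoly.roots.Nodup ↔
      M.charpoly.roots.Nodup ∧ Set.InjOn (· ^ k) (M.charpoly.roots.toFinset : Set K) := by
  rw [← Multiset.toFinset_card_eq_card_iff_nodup, ← Multiset.toFinset_card_eq_card_iff_nodup,
    ← card_image_iff, toFinset_roots_charpoly_pow M hk, card_roots_charpoly, card_roots_charpoly]
  have himage := card_image_le (s := M.charpoly.roots.toFinset) (f := (· ^ k))
  have hroots := M.charpoly.roots.toFinset_card_le
  rw [card_roots_charpoly] at hroots
  omega

end Matrix

/-- Let `A ∈ GL(m, ℚ)` with separable characteristic polynomial. Then `χ_{A^k}`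
is separable for all `k ≥ 1` iff no ratio of two distinct complex eigenvalues
of `A` is a root of unity. -/
theorem stmt_12 (m : ℕ) (A : Matrix (Fin m) (Fin m) ℚ) (hA : IsUnit A)
    (hsep : ∀ z : ℂ, (A.charpoly.map (algebraMap ℚ ℂ)).rootMultiplicity z ≤ 1) :
    (∀ k : ℕ, 0 < k →
        ∀ z : ℂ, ((A ^ k).charpoly.map (algebraMap ℚ ℂ)).rootMultiplicity z ≤ 1) ↔
      (∀ lam mu : ℂ, lam ∈ (A.charpoly.map (algebraMap ℚ ℂ)).roots →
        mu ∈ (A.charpoly.map (algebraMap ℚ ℂ)).roots → lam ≠ mu →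
        ∀ n : ℕ, 0 < n → (lam / mu) ^ n ≠ 1) := by
  set N := A.map (algebraMap ℚ ℂ)
  have hpow (k : ℕ) : (A ^ k).charpoly.map (algebraMap ℚ ℂ) = (N ^ k).charpoly := by
    rw [← Matrix.charpoly_map, Matrix.map_pow]
  have hone : A.charpoly.map (algebraMap ℚ ℂ) = N.charpoly := by
    rw [← Matrix.charpoly_map]
  rw [hone, ← nodup_roots_iff_rootMultiplicity_le_one] at hsep
  have hzero : (0 : ℂ) ∉ (N.charpoly.roots.toFinset : Set ℂ) := by
    rw [Matrix.coe_toFinset_roots_charpoly, spectrum.zero_notMem_iff]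
    exact hA.map (algebraMap ℚ ℂ).mapMatrix
  simp_rw [hpow, ← nodup_roots_iff_rootMultiplicity_le_one, hone]
  calc (∀ k : ℕ, 0 < k → (N ^ k).charpoly.roots.Nodup)
      ↔ ∀ k : ℕ, 0 < k → Set.InjOn (· ^ k) (N.charpoly.roots.toFinset : Set ℂ) :=
        forall₂_congr fun k hk => by rw [N.nodup_roots_charpoly_pow_iff hk, and_iff_right hsep]
    _ ↔ _ := by
        rw [Set.injOn_pow_iff_div_pow_ne_one hzero]
        simp only [Finset.mem_coe, Multiset.mem_toFinset]
end

section
/- Let A ∈ GL(m, ℤ) such that no ratio of eigenvalues of A is a root of unity, and let χ_A be irreducible over ℚ. Then for every k ∈ ℕ and every subspace V ⊆ ℚ^m invariant under A^k, one has V = {0} or V = ℚ^m. -/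
open Module Polynomial Matrix

/-!
A matrix over a field whose characteristic polynomial `χ` is irreducible has only trivial
invariant subspaces: on an invariant subspace `V ≠ 0` the minimal polynomial of the restriction
is a non-unit factor of `χ`, hence `χ` up to a unit, so `dim V ≥ deg χ`.

So it suffices that `χ_{A^k}` is irreducible. As `χ_A` is irreducible over `ℚ`, it is separable,
and since no ratio of eigenvalues is a root of unity the `m` numbers `λᵢ ^ k` are distinct. They
are roots of the minimal polynomial of `A ^ k`, which therefore is `χ_{A^k}`. That minimal
polynomial is irreducible because `A ^ k` lies in `ℚ[A] ≅ ℚ[X]/(χ_A)`, which is a field.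
-/

theorem Module.End.aeval_restrict_apply {R M : Type*} [CommSemiring R] [AddCommMonoid M]
    [Module R M] {f : End R M} {p : Submodule R M} (hf : ∀ x ∈ p, f x ∈ p) (q : R[X]) (x : p) :
    (aeval (f.restrict hf) q x : M) = aeval f q x := by
  induction q using Polynomial.induction_on' with
  | add q r hq hr => simp [hq, hr]
  | monomial n a => simp [aeval_monomial, End.pow_restrict n hf, LinearMap.restrict_apply]

theorem Module.End.eq_bot_or_eq_top_of_irreducible_charpoly {K M : Type*} [Field K]
    [AddCommGroup M] [Module K M] [FiniteDimensional K M] {f : End K M}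
    (hf : Irreducible f.charpoly) {V : Submodule K M} (hV : V ∈ f.invtSubmodule) :
    V = ⊥ ∨ V = ⊤ := by
  refine or_iff_not_imp_left.mpr fun hV0 => ?_
  have : Nontrivial V := Submodule.nontrivial_iff_ne_bot.mpr hV0
  let g := f.restrict ((End.mem_invtSubmodule_iff_forall_mem_of_mem f).mp hV)
  obtain ⟨e, he⟩ : minpoly K g ∣ f.charpoly := minpoly.dvd K g <| LinearMap.ext fun x =>
    Subtype.ext <| by rw [End.aeval_restrict_apply, f.aeval_self_charpoly]; rfl
  have he_unit : IsUnit e := (hf.isUnit_or_isUnit he).resolve_left (minpoly.not_isUnit K g)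
  have hdeg : finrank K M ≤ finrank K V := calc
    finrank K M = f.charpoly.natDegree := f.charpoly_natDegree.symm
    _ = (minpoly K g).natDegree :=
      natDegree_eq_of_degree_eq (degree_eq_degree_of_associated ⟨he_unit.unit, he.symm⟩).symm
    _ ≤ g.charpoly.natDegree := natDegree_le_of_dvd g.minpoly_dvd_charpoly g.charpoly_monic.ne_zero
    _ = finrank K V := g.charpoly_natDegree
  exact Submodule.eq_top_of_finrank_eq (le_antisymm V.finrank_le hdeg)

theorem Matrix.eq_bot_or_eq_top_of_irreducible_charpoly {K n : Type*} [Field K] [Fintype n]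
    [DecidableEq n] {M : Matrix n n K} (hM : Irreducible M.charpoly) {V : Submodule K (n → K)}
    (hV : ∀ v ∈ V, M *ᵥ v ∈ V) : V = ⊥ ∨ V = ⊤ :=
  End.eq_bot_or_eq_top_of_irreducible_charpoly (f := M.toLin') (by rwa [M.charpoly_toLin'])
    ((End.mem_invtSubmodule_iff_forall_mem_of_mem _).mpr hV)

theorem minpoly.irreducible_aeval {K S : Type*} [Field K] [Ring S] [Algebra K S] {x : S}
    (hx : Irreducible (minpoly K x)) (p : K[X]) :
    Irreducible (minpoly K (Polynomial.aeval x p)) := by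
  have : Nontrivial S := not_subsingleton_iff_nontrivial.mp fun _ =>
    hx.not_isUnit (minpoly.subsingleton K x ▸ isUnit_one)
  have hx_int : IsIntegral K x := by_contra fun h => hx.ne_zero (minpoly.eq_zero h)
  have hy_int : IsIntegral K (Polynomial.aeval x p) :=
    .of_mem_of_fg _ hx_int.fg_adjoin_singleton _ (aeval_mem_adjoin_singleton K x)
  refine Prime.irreducible ⟨minpoly.ne_zero hy_int, minpoly.not_isUnit K _, fun a b hab => ?_⟩
  have hdvd_comp (c : K[X]) : minpoly K x ∣ c.comp p ↔ minpoly K (Polynomial.aeval x p) ∣ c := by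
    rw [minpoly.dvd_iff, minpoly.dvd_iff, aeval_comp]
  rw [← hdvd_comp, ← hdvd_comp]
  exact hx.prime.dvd_or_dvd (by rwa [← mul_comp, hdvd_comp])

theorem minpoly.aeval_eq_zero_of_mem_spectrum {K L A : Type*} [Field K] [Field L] [Ring A]
    [Algebra K L] [Algebra L A] [Algebra K A] [IsScalarTower K L A] {a : A} {μ : L}
    (hμ : μ ∈ spectrum L a) : Polynomial.aeval μ (minpoly K a) = 0 := by
  rcases subsingleton_or_nontrivial A with hA | hA
  · simp [spectrum.of_subsingleton] at hμ
  have h := spectrum.subset_polynomial_aeval a ((minpoly K a).map (algebraMap K L)) ⟨μ, hμ, rfl⟩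
  simp only at h
  rwa [aeval_map_algebraMap, minpoly.aeval, spectrum.zero_eq, Set.mem_singleton_iff,
    eval_map_algebraMap] at h

theorem Set.injOn_pow_of_div_pow_ne_one {G₀ : Type*} [CommGroupWithZero G₀] {s : Set G₀} {k : ℕ}
    (hk : k ≠ 0) (h : ∀ x ∈ s, ∀ y ∈ s, x ≠ y → (x / y) ^ k ≠ 1) : s.InjOn (· ^ k) := by
  intro x hx y hy hxy
  simp only at hxy
  by_contra hne
  rcases eq_or_ne y 0 with rfl | hy0
  · exact hne (pow_eq_zero_iff hk |>.mp (by simpa [hk] using hxy))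
  · exact h x hx y hy hne (by rw [div_pow, hxy, div_self (pow_ne_zero _ hy0)])

theorem Matrix.card_le_natDegree_minpoly_pow {K L n : Type*} [Field K] [Field L] [IsAlgClosed L]
    [Algebra K L] [Fintype n] [DecidableEq n] (M : Matrix n n K) (hM : M.charpoly.Separable)
    {k : ℕ} (hk : (M.charpoly.rootSet L).InjOn (· ^ k)) :
    Fintype.card n ≤ (minpoly K (M ^ k)).natDegree := by
  let φ := (Algebra.ofId K L).mapMatrix (m := n)
  have hpow_mem : (· ^ k) '' M.charpoly.rootSet L ⊆ (minpoly K (M ^ k)).rootSet L := by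
    rintro _ ⟨μ, hμ, rfl⟩
    have hμ' : μ ∈ spectrum L (φ M) := by
      rw [Matrix.mem_spectrum_iff_isRoot_charpoly, show (φ M).charpoly = _ from
        M.charpoly_map (algebraMap K L), IsRoot, eval_map_algebraMap]
      exact (mem_rootSet.mp hμ).2
    refine (mem_rootSet.mpr ⟨minpoly.ne_zero (.of_finite K (M ^ k)), ?_⟩)
    rw [← minpoly.algHom_eq φ (Matrix.map_injective (algebraMap K L).injective) (M ^ k), map_pow]
    exact minpoly.aeval_eq_zero_of_mem_spectrum (K := K) (spectrum.pow_mem_pow _ k hμ')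
  calc Fintype.card n = M.charpoly.natDegree := M.charpoly_natDegree_eq_dim.symm
    _ = (M.charpoly.rootSet L).ncard := by
      rw [← card_rootSet_eq_natDegree hM (IsAlgClosed.splits (k := L) _),
        Set.ncard_eq_toFinset_card', Set.toFinset_card]
    _ = ((· ^ k) '' M.charpoly.rootSet L).ncard := hk.ncard_image.symm
    _ ≤ ((minpoly K (M ^ k)).rootSet L).ncard := Set.ncard_le_ncard hpow_mem (rootSet_finite _ _)
    _ ≤ _ := ncard_rootSet_le _ _

theorem Matrix.minpoly_eq_charpoly_of_irreducible {K n : Type*} [Field K] [Fintype n]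
    [DecidableEq n] {M : Matrix n n K} (hM : Irreducible M.charpoly) :
    minpoly K M = M.charpoly := by
  have : Nonempty n := Fintype.card_pos_iff.mp <| M.charpoly_natDegree_eq_dim ▸ hM.natDegree_pos
  exact (minpoly.eq_of_irreducible_of_monic hM M.aeval_self_charpoly M.charpoly_monic).symm

theorem Matrix.irreducible_charpoly_pow {K n : Type*} [Field K] [Fintype n] [DecidableEq n]
    {M : Matrix n n K} (hM : Irreducible M.charpoly) {k : ℕ}
    (hk : Fintype.card n ≤ (minpoly K (M ^ k)).natDegree) : Irreducible (M ^ k).charpoly := by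
  have hmin : (M ^ k).charpoly = minpoly K (M ^ k) :=
    eq_of_monic_of_dvd_of_natDegree_le (minpoly.monic (.of_finite K _)) (M ^ k).charpoly_monic
      (M ^ k).minpoly_dvd_charpoly (by rwa [charpoly_natDegree_eq_dim])
  rw [hmin, ← aeval_X_pow (R := K)]
  exact minpoly.irreducible_aeval (M.minpoly_eq_charpoly_of_irreducible hM ▸ hM) _

theorem stmt_17_general (m : ℕ) (A : Matrix (Fin m) (Fin m) ℤ)
    (hratio : ∀ lam mu : ℂ,
      lam ∈ (A.charpoly.map (Int.castRingHom ℂ)).roots →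
      mu ∈ (A.charpoly.map (Int.castRingHom ℂ)).roots → lam ≠ mu →
      ∀ n : ℕ, 0 < n → (lam / mu) ^ n ≠ 1)
    (hirr : Irreducible (A.charpoly.map (Int.castRingHom ℚ))) :
    ∀ k : ℕ, 0 < k → ∀ V : Submodule ℚ (Fin m → ℚ),
      (∀ v ∈ V, ((A ^ k).map (fun z : ℤ => (z : ℚ))).mulVec v ∈ V) →
      V = ⊥ ∨ V = ⊤ := by
  intro k hk V hV
  set B : Matrix (Fin m) (Fin m) ℚ := A.map (Int.castRingHom ℚ)
  have hB : B.charpoly = A.charpoly.map (Int.castRingHom ℚ) := A.charpoly_map _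
  rw [← hB] at hirr
  have hroots : B.charpoly.rootSet ℂ = {μ | μ ∈ (A.charpoly.map (Int.castRingHom ℂ)).roots} := by
    rw [rootSet, aroots, hB, Polynomial.map_map,
      RingHom.ext_int ((algebraMap ℚ ℂ).comp (Int.castRingHom ℚ)) (Int.castRingHom ℂ)]
    ext; simp
  have hinj : (B.charpoly.rootSet ℂ).InjOn (· ^ k) := hroots ▸
    Set.injOn_pow_of_div_pow_ne_one hk.ne' fun x hx y hy hxy => hratio x y hx hy hxy k hk
  have hBk : Irreducible (B ^ k).charpoly :=
    B.irreducible_charpoly_pow hirr (B.card_le_natDegree_minpoly_pow hirr.separable hinj)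
  rw [show (A ^ k).map (fun z : ℤ => (z : ℚ)) = B ^ k from
    (Int.castRingHom ℚ).mapMatrix.map_pow A k] at hV
  exact Matrix.eq_bot_or_eq_top_of_irreducible_charpoly hBk hV

/-- Let `A ∈ GL(m, ℤ)` such that no ratio of (distinct) complex eigenvalues of `A`
is a root of unity and `χ_A` is irreducible over `ℚ`. Then for every `k ≥ 1`,
every subspace of `ℚ^m` invariant under `A^k` is `{0}` or `ℚ^m`. -/
theorem stmt_17 (m : ℕ) (A : Matrix (Fin m) (Fin m) ℤ) (hA : IsUnit A)
    (hratio : ∀ lam mu : ℂ,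
      lam ∈ (A.charpoly.map (Int.castRingHom ℂ)).roots →
      mu ∈ (A.charpoly.map (Int.castRingHom ℂ)).roots → lam ≠ mu →
      ∀ n : ℕ, 0 < n → (lam / mu) ^ n ≠ 1)
    (hirr : Irreducible (A.charpoly.map (Int.castRingHom ℚ))) :
    ∀ k : ℕ, 0 < k → ∀ V : Submodule ℚ (Fin m → ℚ),
      (∀ v ∈ V, ((A ^ k).map (fun z : ℤ => (z : ℚ))).mulVec v ∈ V) →
      V = ⊥ ∨ V = ⊤ :=
  stmt_17_general m A hratio hirr
end

section
/- Let A' ∈ GL(d, ℤ), d ≥ 3, with Galois group of χ_{A'} equal to the full symmetric group S_d, and let λ_i, λ_j be two distinct roots of χ_{A'}. If λ_i^N ∈ ℚ(λ_j) for some N ∈ ℕ, then λ_i^N = ±1. Consequently, if additionally χ_{A'} is not cyclotomic, no ratio λ_i^N = λ_j^N can occur for i ≠ j, i.e. no ratio of eigenvalues of A' is a root of unity. -/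
/-!
If `λ ^ N ∈ ℚ(μ)`, then `λ ^ N ∈ ℚ(λ) ∩ ℚ(μ)`, which is the fixed field of the subgroup
generated by the stabilizers of `λ` and `μ` in `Gal(χ) ≅ S_d`. For `d ≥ 3` these two copies of
`S_{d-1}` generate `S_d`, so `λ ^ N = r ∈ ℚ`. Transitivity of the Galois action makes `χ` the
minimal polynomial of `λ`, so every root `z` of `χ` satisfies `z ^ N = r`; the product over all
roots gives `|r| ^ d = |det A'| ^ N = 1`, hence `r = ±1`. If `λ ^ N = μ ^ N`, then `λ` is a root
of unity, whose minimal polynomial `χ` is then cyclotomic.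
-/

open Polynomial

theorem Equiv.Perm.closure_setOf_apply_eq_or_apply_eq {α : Type*} [Finite α] {a b c : α}
    (hab : a ≠ b) (hca : c ≠ a) (hcb : c ≠ b) :
    Subgroup.closure {g : Equiv.Perm α | g a = a ∨ g b = b} = ⊤ := by
  classical
  set H := Subgroup.closure {g : Equiv.Perm α | g a = a ∨ g b = b}
  have mem_of_fix {g : Equiv.Perm α} (hg : g a = a ∨ g b = b) : g ∈ H := Subgroup.subset_closure hg
  -- `swap a b` fixes neither `a` nor `b`, but it is the conjugate of `swap a c` by `swap c b`.
  have hswap : Equiv.swap a b ∈ H := by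
    rw [Equiv.swap_comm, ← Equiv.swap_mul_swap_mul_swap hca.symm hab]
    refine H.mul_mem (H.mul_mem ?_ ?_) ?_ <;> apply mem_of_fix
    · exact .inl (Equiv.swap_apply_of_ne_of_ne hca.symm hab)
    · exact .inr (Equiv.swap_apply_of_ne_of_ne hab.symm hcb.symm)
    · exact .inl (Equiv.swap_apply_of_ne_of_ne hca.symm hab)
  rw [eq_top_iff, ← Equiv.Perm.closure_isSwap, Subgroup.closure_le]
  rintro _ ⟨x, y, -, rfl⟩
  by_cases hfix : Equiv.swap x y a = a ∨ Equiv.swap x y b = b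
  · exact mem_of_fix hfix
  · simp only [not_or, Equiv.swap_apply_ne_self_iff] at hfix
    obtain ⟨⟨-, rfl | rfl⟩, -, rfl | rfl⟩ := hfix
    · exact (hab rfl).elim
    · exact hswap
    · exact Equiv.swap_comm a b ▸ hswap
    · exact (hab rfl).elim

-- Over `ℚ` itself, `IsGalois ℚ f.SplittingField` elaborates with `DivisionRing.toRatAlgebra`,
-- not the splitting field's own algebra structure that the lemmas below are stated with.
theorem Polynomial.isGalois_splittingField {F : Type*} [Field F] [PerfectField F] (p : F[X]) :
    IsGalois F p.SplittingField := ⟨⟩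

namespace Polynomial.Gal

variable {F E : Type*} [Field F] [Field E] [Algebra F E] {p : F[X]}
  [Fact ((p.map (algebraMap F E)).Splits)]

theorem algebraMap_rootsEquivRoots_symm (z : p.rootSet E) :
    algebraMap p.SplittingField E ((rootsEquivRoots p E).symm z) = z :=
  congrArg Subtype.val ((rootsEquivRoots p E).apply_symm_apply z)

theorem coe_smul_rootSet (σ : p.Gal) (z : p.rootSet E) :
    ((σ • z : p.rootSet E) : E) =
      algebraMap p.SplittingField E (σ ((rootsEquivRoots p E).symm z)) :=
  rfl

theorem apply_rootsEquivRoots_symm_of_smul_eq {σ : p.Gal} {z : p.rootSet E} (h : σ • z = z) :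
    σ ((rootsEquivRoots p E).symm z) = (rootsEquivRoots p E).symm z := by
  have := congrArg (fun w => ((rootsEquivRoots p E).symm w : p.SplittingField)) h
  rwa [smul_def, Equiv.symm_apply_apply] at this

theorem isPretransitive_of_surjective (hsurj : Function.Surjective (galActionHom p E)) :
    MulAction.IsPretransitive p.Gal (p.rootSet E) := by
  classical
  refine ⟨fun z w => ?_⟩
  obtain ⟨σ, hσ⟩ := hsurj (Equiv.swap z w)
  exact ⟨σ, by rw [← Equiv.swap_apply_left z w, ← hσ]; rfl⟩

theorem eq_minpoly_of_isPretransitive [MulAction.IsPretransitive p.Gal (p.rootSet E)]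
    (hp : p.Monic) (hcard : Nat.card (p.rootSet E) = p.natDegree) {z : E} (hz : z ∈ p.rootSet E) :
    p = minpoly F z := by
  have hint : IsIntegral F z := ⟨p, hp, by rw [← aeval_def]; exact (mem_rootSet.mp hz).2⟩
  have hconj : ∀ w ∈ p.rootSet E, minpoly F w = minpoly F z := by
    intro w hw
    obtain ⟨σ, hσ⟩ := MulAction.exists_smul_eq p.Gal (⟨z, hz⟩ : p.rootSet E) ⟨w, hw⟩
    set z' := ((rootsEquivRoots p E).symm ⟨z, hz⟩ : p.SplittingField)
    have hinj := (algebraMap p.SplittingField E).injective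
    calc minpoly F w = minpoly F (algebraMap p.SplittingField E (σ z')) := by
          rw [← coe_smul_rootSet, hσ]
      _ = minpoly F z' := (minpoly.algebraMap_eq hinj _).trans (minpoly.algEquiv_eq σ z')
      _ = minpoly F z := by rw [← minpoly.algebraMap_eq hinj, algebraMap_rootsEquivRoots_symm]
  have hsub : p.rootSet E ⊆ (minpoly F z).rootSet E := fun w hw =>
    mem_rootSet.mpr ⟨minpoly.ne_zero hint, hconj w hw ▸ minpoly.aeval F w⟩
  refine eq_of_monic_of_dvd_of_natDegree_le (minpoly.monic hint) hp
    (minpoly.dvd F z (mem_rootSet.mp hz).2) ?_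
  calc p.natDegree = (p.rootSet E).ncard := by rw [← hcard, Nat.card_coe_set_eq]
    _ ≤ ((minpoly F z).rootSet E).ncard := Set.ncard_le_ncard hsub ((minpoly F z).rootSet_finite E)
    _ ≤ (minpoly F z).natDegree := ncard_rootSet_le _ E

theorem exists_algebraMap_eq_of_forall_smul_eq_or_smul_eq [IsGalois F p.SplittingField]
    (hsurj : Function.Surjective (galActionHom p E)) {a b c : p.rootSet E}
    (hab : a ≠ b) (hca : c ≠ a) (hcb : c ≠ b) {x : p.SplittingField}
    (hx : ∀ σ : p.Gal, σ • a = a ∨ σ • b = b → σ x = x) :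
    ∃ r : F, algebraMap F p.SplittingField r = x := by
  have hstab : (MulAction.stabilizer p.Gal x).map (galActionHom p E) = ⊤ := by
    rw [eq_top_iff, ← Equiv.Perm.closure_setOf_apply_eq_or_apply_eq hab hca hcb,
      Subgroup.closure_le]
    intro g hg
    obtain ⟨σ, rfl⟩ := hsurj g
    exact ⟨σ, hx σ hg, rfl⟩
  have hfix : ∀ σ : p.Gal, σ x = x := by
    intro σ
    obtain ⟨τ, hτ, hτσ⟩ := hstab.ge (Subgroup.mem_top (galActionHom p E σ))
    exact galActionHom_injective p E hτσ ▸ hτ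
  exact IntermediateField.mem_bot.mp ((IsGalois.mem_bot_iff_fixed x).mpr hfix)

theorem exists_algebraMap_eq_of_aeval_eq_aeval [IsGalois F p.SplittingField]
    (hsurj : Function.Surjective (galActionHom p E)) (hcard : 2 < Nat.card (p.rootSet E))
    {lam mu : E} (hlam : lam ∈ p.rootSet E) (hmu : mu ∈ p.rootSet E) (hne : lam ≠ mu)
    {q₁ q₂ : F[X]} (h : aeval lam q₁ = aeval mu q₂) :
    ∃ r : F, algebraMap F E r = aeval lam q₁ := by
  classical
  set a : p.rootSet E := ⟨lam, hlam⟩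
  set b : p.rootSet E := ⟨mu, hmu⟩
  have hab : a ≠ b := fun h => hne (congrArg Subtype.val h)
  obtain ⟨c, -, hc⟩ := Finset.exists_mem_notMem_of_card_lt_card
    (s := {a, b}) (t := Finset.univ) (by
      rw [Finset.card_univ, ← Nat.card_eq_fintype_card]
      exact (Finset.card_le_two).trans_lt hcard)
  simp only [Finset.mem_insert, Finset.mem_singleton, not_or] at hc
  set a' := ((rootsEquivRoots p E).symm a : p.SplittingField)
  set b' := ((rootsEquivRoots p E).symm b : p.SplittingField)
  have hinj := (algebraMap p.SplittingField E).injective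
  have hx : aeval a' q₁ = aeval b' q₂ := hinj <| by
    rw [← aeval_algebraMap_apply, ← aeval_algebraMap_apply, algebraMap_rootsEquivRoots_symm,
      algebraMap_rootsEquivRoots_symm, h]
  obtain ⟨r, hr⟩ := exists_algebraMap_eq_of_forall_smul_eq_or_smul_eq hsurj hab hc.1 hc.2
    (x := aeval a' q₁) <| by
      rintro σ (hσ | hσ)
      · rw [← aeval_algHom_apply, apply_rootsEquivRoots_symm_of_smul_eq hσ]
      · rw [hx, ← aeval_algHom_apply, apply_rootsEquivRoots_symm_of_smul_eq hσ]
  refine ⟨r, ?_⟩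
  rw [IsScalarTower.algebraMap_apply F p.SplittingField E, hr, ← aeval_algebraMap_apply,
    algebraMap_rootsEquivRoots_symm]

end Polynomial.Gal

theorem Matrix.isUnit_charpoly_coeff_zero {R n : Type*} [CommRing R] [Fintype n] [DecidableEq n]
    {A : Matrix n n R} (hA : IsUnit A) : IsUnit (A.charpoly.coeff 0) :=
  isUnit_of_mul_isUnit_right <| A.det_eq_sign_charpoly_coeff ▸ (A.isUnit_iff_isUnit_det.mp hA)

theorem Polynomial.norm_eq_one_of_forall_mem_roots_pow_eq {E : Type*} [NormedField E] {p : E[X]}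
    (hp : p.Monic) (hsplit : p.Splits) (hdeg : p.natDegree ≠ 0) (h0 : ‖p.coeff 0‖ = 1)
    {N : ℕ} {c : E} (hc : ∀ z ∈ p.roots, z ^ N = c) : ‖c‖ = 1 := by
  have hprod : ‖p.roots.prod‖ = 1 := by
    rwa [hsplit.coeff_zero_eq_prod_roots_of_monic hp, norm_mul, norm_pow, norm_neg, norm_one,
      one_pow, one_mul] at h0
  have hpow : p.roots.prod ^ N = c ^ p.natDegree := by
    calc p.roots.prod ^ N = (p.roots.map (· ^ N)).prod := by
          rw [Multiset.prod_map_pow, Multiset.map_id']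
      _ = (p.roots.map fun _ => c).prod := by rw [Multiset.map_congr rfl hc]
      _ = c ^ p.natDegree := by
          rw [Multiset.map_const', Multiset.prod_replicate, ← splits_iff_card_roots.mp hsplit]
  rw [← pow_eq_one_iff_of_nonneg (norm_nonneg c) hdeg, ← norm_pow, ← hpow, norm_pow, hprod,
    one_pow]

theorem pow_eq_one_or_neg_one_of_pow_eq_ratCast {x : ℂ} (hx : IsIntegral ℚ x)
    (h0 : |(minpoly ℚ x).coeff 0| = 1) {N : ℕ} {r : ℚ} (hr : x ^ N = r) :
    x ^ N = 1 ∨ x ^ N = -1 := by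
  have hmonic := minpoly.monic hx
  have hconj : ∀ z ∈ ((minpoly ℚ x).map (algebraMap ℚ ℂ)).roots, z ^ N = r := by
    intro z hz
    have hz : aeval z (minpoly ℚ x) = 0 := by
      rw [aeval_def]; exact (mem_roots_map hmonic.ne_zero).mp hz
    have := aeval_eq_zero_of_dvd_aeval_eq_zero
      (minpoly.dvd ℚ x (p := X ^ N - C r) (by simp [hr])) hz
    simpa [sub_eq_zero] using this
  have hnorm := norm_eq_one_of_forall_mem_roots_pow_eq (hmonic.map _) (IsAlgClosed.splits _)
    (by rw [hmonic.natDegree_map]; exact (minpoly.natDegree_pos hx).ne')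
    (by rw [coeff_map, eq_ratCast, Complex.norm_ratCast]; exact_mod_cast h0) hconj
  rw [Complex.norm_ratCast] at hnorm
  rcases (abs_eq zero_le_one).mp (by exact_mod_cast hnorm : |r| = 1) with rfl | rfl <;>
    simp [hr]

/-- Let `A' ∈ GL(d, ℤ)`, `d ≥ 3`, such that the Galois group of `χ_{A'}` is the
full symmetric group on its `d` roots, and let `λ ≠ μ` be roots of `χ_{A'}` in `ℂ`.
If `λ^N ∈ ℚ(μ)` for some `N ≥ 1`, then `λ^N = ±1`. Consequently, if `χ_{A'}` is
not cyclotomic, then `λ^N ≠ μ^N` for all `N ≥ 1`, i.e. no ratio of eigenvalues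
of `A'` is a root of unity. -/
theorem stmt_18 (d : ℕ) (hd : 3 ≤ d) (A' : Matrix (Fin d) (Fin d) ℤ) (hA : IsUnit A')
    (f : Polynomial ℚ) (hf : f = (A'.charpoly).map (Int.castRingHom ℚ))
    [hfact : Fact ((f.map (algebraMap ℚ ℂ)).Splits)]
    (hcard : Nat.card (f.rootSet ℂ) = d)
    (hGal : Function.Surjective (Polynomial.Gal.galActionHom f ℂ))
    (lam mu : ℂ) (hlam : lam ∈ f.rootSet ℂ) (hmu : mu ∈ f.rootSet ℂ) (hne : lam ≠ mu) :
    (∀ N : ℕ, 0 < N → (∃ q : Polynomial ℚ, Polynomial.aeval mu q = lam ^ N) →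
      lam ^ N = 1 ∨ lam ^ N = -1) ∧
    ((∀ n : ℕ, f ≠ Polynomial.cyclotomic n ℚ) →
      ∀ N : ℕ, 0 < N → lam ^ N ≠ mu ^ N) := by
  have hmonic : f.Monic := hf ▸ A'.charpoly_monic.map _
  have hdeg : f.natDegree = d := by
    rw [hf, A'.charpoly_monic.natDegree_map, Matrix.charpoly_natDegree_eq_dim, Fintype.card_fin]
  have := isGalois_splittingField f
  have := Gal.isPretransitive_of_surjective hGal
  have hmin : f = minpoly ℚ lam :=
    Gal.eq_minpoly_of_isPretransitive hmonic (hcard.trans hdeg.symm) hlam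
  have hint : IsIntegral ℚ lam := minpoly.ne_zero_iff.mp (hmin ▸ hmonic.ne_zero)
  have hcoeff : |(minpoly ℚ lam).coeff 0| = 1 := by
    rcases Int.isUnit_iff.mp (Matrix.isUnit_charpoly_coeff_zero hA) with h | h <;>
      simp [← hmin, hf, h]
  have hpow : ∀ N : ℕ, (∃ q : ℚ[X], aeval mu q = lam ^ N) → lam ^ N = 1 ∨ lam ^ N = -1 := by
    rintro N ⟨q, hq⟩
    obtain ⟨r, hr⟩ := Gal.exists_algebraMap_eq_of_aeval_eq_aeval hGal (by omega) hlam hmu hne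
      (q₁ := X ^ N) (q₂ := q) (by rw [hq, map_pow, aeval_X])
    rw [map_pow, aeval_X, eq_ratCast] at hr
    exact pow_eq_one_or_neg_one_of_pow_eq_ratCast hint hcoeff hr.symm
  refine ⟨fun N _ => hpow N, fun hcyc N hN heq => ?_⟩
  have hfin : IsOfFinOrder lam := by
    refine isOfFinOrder_iff_pow_eq_one.mpr ⟨2 * N, by omega, ?_⟩
    rcases hpow N ⟨X ^ N, by rw [map_pow, aeval_X, heq]⟩ with h | h <;> simp [pow_mul', h]
  exact hcyc (orderOf lam)
    (hmin.trans (cyclotomic_eq_minpoly_rat (IsPrimitiveRoot.orderOf lam) hfin.orderOf_pos).symm)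
end
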